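/- arXiv:0809.2019 — 3 statements merged into one kernel-verified Lean document; each statement's English description precedes it below -/
import Mathlib

section
/- Let ∼ be a 2-invariant lamination on the circle 𝕋 (a closed equivalence relation with nowhere-dense, pairwise unlinked classes such that the image of each class under the doubling map σ is a class). If C is a critical class (i.e., σ restricted to C is not injective), then C is invariant under the rotation x ↦ x + 1/2, and σ⁻¹(σ(C)) = C. -/
noncomputable section
open Set

/-- The circle `𝕋 = ℝ/ℤ`. -/
abbrev Torus := AddCircle (1 : ℝ)

/-- The angle doubling map `σ(x) = 2x`. -/
def sigma (x : Torus) : Torus := x + x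

/-- The half rotation point `1/2`. -/
def half : Torus := ((1/2 : ℝ) : Torus)

/-- The embedding of `𝕋 = ℝ/ℤ` onto the unit circle in `ℂ`. -/
def emb (x : Torus) : ℂ := (AddCircle.toCircle x : ℂ)

/-- A 2-invariant lamination on the circle: a closed equivalence relation with
nowhere dense, pairwise unlinked  classes (disjoint convex hulls in `ℂ`), such that
the doubling map sends each class onto a class. -/
structure Lamination where
  /-- the equivalence relation -/
  r : Torus → Torus → Prop
  equiv : Equivalence r
  /-- the graph of the relation is closed -/
  closed : IsClosed {p : Torus × Torus | r p.1 p.2}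
  /-- classes are nowhere dense -/
  nwd : ∀ x : Torus, IsNowhereDense {y | r x y}
  /-- distinct classes are unlinked: their convex hulls in the plane are disjoint -/
  unlinked : ∀ x y : Torus, ¬ r x y →
    Disjoint (convexHull ℝ (emb '' {z | r x z})) (convexHull ℝ (emb '' {z | r y z}))
  /-- 2-invariance: the image of each class under `σ` is a class -/
  invariant : ∀ x : Torus, sigma '' {y | r x y} = {y | r (sigma x) y}


lemma half_add_half : half + half = 0 := by
  have h1 : ((1/2 : ℝ) : Torus) + ((1/2 : ℝ) : Torus) = ((1 : ℝ) : Torus) := by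
    rw [← AddCircle.coe_add]
    norm_num
  rw [half, h1, AddCircle.coe_period]

lemma double_eq_zero (t : Torus) (h : t + t = 0) : t = 0 ∨ t = half := by
  induction t using QuotientAddGroup.induction_on with
  | H r =>
    have h' : ((r + r : ℝ) : Torus) = 0 := by rwa [AddCircle.coe_add]
    obtain ⟨n, hn⟩ := (AddCircle.coe_eq_zero_iff _).mp h'
    simp only [zsmul_eq_mul, mul_one] at hn
    rcases Int.even_or_odd n with ⟨k, hk⟩ | ⟨k, hk⟩
    · left
      have hr : (r : ℝ) = k := by
        have h2 : (n : ℝ) = r + r := hn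
        rw [hk] at h2; push_cast at h2; linarith
      rw [hr, AddCircle.coe_eq_zero_iff]
      exact ⟨k, by simp⟩
    · right
      have hr : (r : ℝ) = k + 1/2 := by
        have h2 : (n : ℝ) = r + r := hn
        rw [hk] at h2; push_cast at h2; linarith
      have h3 : ((r : ℝ) : Torus) - ((1/2 : ℝ) : Torus) = 0 := by
        rw [← AddCircle.coe_sub, AddCircle.coe_eq_zero_iff]
        exact ⟨k, by simp [hr]⟩
      exact sub_eq_zero.mp h3

lemma sigma_cancel (u v : Torus) (h : sigma u = sigma v) : u = v ∨ u = v + half := by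
  have h' : (u - v) + (u - v) = 0 := by
    have e : (u - v) + (u - v) = (u + u) - (v + v) := by abel
    rw [e, show u + u = v + v from h, sub_self]
  rcases double_eq_zero _ h' with h0 | hh
  · exact Or.inl (sub_eq_zero.mp h0)
  · exact Or.inr (by rw [← hh]; abel)

lemma sigma_add_half (y : Torus) : sigma (y + half) = sigma y := by
  show (y + half) + (y + half) = y + y
  have e : (y + half) + (y + half) = (y + y) + (half + half) := by abel
  rw [e, half_add_half, add_zero]

/-- The `∼`-class of a point. -/
def cls (L : Lamination) (x : Torus) : Set Torus := {y | L.r x y}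

/-- A critical class (one on which `σ` is not injective) is invariant under rotation by
`1/2`, and equals the full `σ`-preimage of its image. -/
theorem critical_class_symmetric (L : Lamination) (x : Torus)
    (hcrit : ¬ Set.InjOn sigma (cls L x)) :
    (fun y => y + half) '' cls L x = cls L x ∧
      sigma ⁻¹' (sigma '' cls L x) = cls L x := by
  rw [Set.InjOn] at hcrit
  push_neg at hcrit
  obtain ⟨a, ha, b, hb, hab, hne⟩ := hcrit
  have hba : a = b + half := by
    rcases sigma_cancel a b hab with h | h
    · exact absurd h hne
    · exact h
  -- key claim: the class is closed under adding `half`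
  have key : ∀ y, L.r x y → L.r x (y + half) := by
    intro y hy
    by_contra hz
    set z := y + half with hzdef
    have h1 : L.r (sigma x) (sigma y) := by
      have : sigma y ∈ {w | L.r (sigma x) w} := by
        rw [← L.invariant x]; exact ⟨y, hy, rfl⟩
      exact this
    have h2 : L.r (sigma x) (sigma b) := by
      have : sigma b ∈ {w | L.r (sigma x) w} := by
        rw [← L.invariant x]; exact ⟨b, hb, rfl⟩
      exact this
    have h3 : L.r (sigma z) (sigma b) := by
      rw [hzdef, sigma_add_half]
      exact L.equiv.trans (L.equiv.symm h1) h2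
    have h4 : sigma b ∈ sigma '' {w | L.r z w} := by
      rw [L.invariant z]; exact h3
    obtain ⟨c, hc, hcb⟩ := h4
    rcases sigma_cancel c b hcb with h | h
    · exact hz (L.equiv.trans hb (L.equiv.symm (h ▸ hc)))
    · rw [← hba] at h
      exact hz (L.equiv.trans ha (L.equiv.symm (h ▸ hc)))
  constructor
  · apply Set.Subset.antisymm
    · rintro _ ⟨y, hy, rfl⟩
      exact key y hy
    · intro y hy
      refine ⟨y + half, key y hy, ?_⟩
      show (y + half) + half = y
      rw [add_assoc, half_add_half, add_zero]
  · apply Set.Subset.antisymm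
    · rintro w ⟨c, hc, hcw⟩
      rcases sigma_cancel w c hcw.symm with h | h
      · exact h ▸ hc
      · exact h ▸ key c hc
    · intro w hw
      exact ⟨w, hw, rfl⟩
end
end

section
/- Let ∼ be a 2-invariant lamination on 𝕋. If C is a non-critical class (σ|_C is injective), then C' = {x + 1/2 : x ∈ C} is another class disjoint from C, and σ⁻¹(σ(C)) = C ∪ C'. -/
noncomputable section
open Set

lemma half_ne_zero : half ≠ 0 := by
  intro h
  obtain ⟨n, hn⟩ := (AddCircle.coe_eq_zero_iff _).1 h
  simp only [zsmul_eq_mul, mul_one] at hn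
  have : (2 : ℝ) * n = 1 := by linarith
  have : (2 : ℤ) * n = 1 := by exact_mod_cast this
  omega

lemma two_eq_zero_iff (t : Torus) : t + t = 0 ↔ t = 0 ∨ t = half := by
  constructor
  · intro h
    induction t using QuotientAddGroup.induction_on with
    | H a =>
      rw [← AddCircle.coe_add] at h
      obtain ⟨n, hn⟩ := (AddCircle.coe_eq_zero_iff _).1 h
      simp only [zsmul_eq_mul, mul_one] at hn
      rcases Int.even_or_odd n with ⟨k, hk⟩ | ⟨k, hk⟩
      · left
        have ha : a = (k : ℝ) := by
          have : ((n : ℝ)) = (k : ℝ) + (k : ℝ) := by exact_mod_cast congrArg Int.cast hk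
          linarith
        rw [ha]
        exact (AddCircle.coe_eq_zero_iff _).2 ⟨k, by simp⟩
      · right
        have ha : a - 1/2 = (k : ℝ) := by
          have : ((n : ℝ)) = 2*(k : ℝ) + 1 := by exact_mod_cast congrArg Int.cast hk
          linarith
        unfold half
        rw [QuotientAddGroup.eq_iff_sub_mem]
        exact AddSubgroup.mem_zmultiples_iff.2 ⟨k, by rw [zsmul_eq_mul, mul_one]; exact ha.symm⟩
  · rintro (rfl | rfl)
    · simp
    · exact half_add_half

lemma sigma_eq_iff (w c : Torus) : sigma w = sigma c ↔ w = c ∨ w = c + half := by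
  unfold sigma
  constructor
  · intro h
    have h2 : (w - c) + (w - c) = 0 := by
      have := sub_eq_zero.2 h
      rw [show w + w - (c + c) = (w - c) + (w - c) by abel] at this
      exact this
    rcases (two_eq_zero_iff _).1 h2 with h3 | h3
    · left; exact sub_eq_zero.1 h3
    · right; rw [← h3]; abel
  · rintro (rfl | rfl)
    · rfl
    · rw [show c + half + (c + half) = c + c + (half + half) by abel, half_add_half, add_zero]

lemma preimage_sigma_image (S : Set Torus) :
    sigma ⁻¹' (sigma '' S) = S ∪ (fun y => y + half) '' S := by
  ext w
  simp only [mem_preimage, mem_image, mem_union]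
  constructor
  · rintro ⟨c, hc, hec⟩
    rcases (sigma_eq_iff w c).1 hec.symm with rfl | rfl
    · exact Or.inl hc
    · exact Or.inr ⟨c, hc, rfl⟩
  · rintro (hw | ⟨c, hc, rfl⟩)
    · exact ⟨w, hw, rfl⟩
    · exact ⟨c, hc, ((sigma_eq_iff _ c).2 (Or.inr rfl)).symm⟩


/-- If `C` is a non-critical class, then `C' = C + 1/2` is another class disjoint from
`C`, and `σ⁻¹(σ(C)) = C ∪ C'`. -/
theorem noncritical_class_sibling (L : Lamination) (x : Torus)
    (hnc : Set.InjOn sigma (cls L x)) :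
    (fun y => y + half) '' cls L x = cls L (x + half) ∧
      Disjoint (cls L x) ((fun y => y + half) '' cls L x) ∧
      sigma ⁻¹' (sigma '' cls L x) = cls L x ∪ (fun y => y + half) '' cls L x := by
    -- basic lamination facts
  have rfl_x : ∀ a : Torus, a ∈ cls L a := fun a => L.equiv.refl a
  have cls_inv : ∀ a : Torus, sigma '' cls L a = cls L (sigma a) := L.invariant
  have sig_half : sigma (x + half) = sigma x := by
    unfold sigma
    rw [show x + half + (x + half) = x + x + (half + half) by abel, half_add_half, add_zero]
  -- x + half is not related to x
  have hx : ¬ L.r x (x + half) := by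
    intro h
    have h1 : x + half ∈ cls L x := h
    have h2 : x ∈ cls L x := rfl_x x
    have h3 := hnc h2 h1 sig_half.symm
    exact half_ne_zero (add_left_cancel (a := x) (by rw [add_zero]; exact h3)).symm
  -- disjointness of the two classes
  have hdisj : Disjoint (cls L x) (cls L (x + half)) := by
    rw [Set.disjoint_left]
    intro z hz hz'
    exact hx (L.equiv.trans hz (L.equiv.symm hz'))
  -- the two classes have the same sigma-image
  have himg : sigma '' cls L x = sigma '' cls L (x + half) := by
    rw [cls_inv, cls_inv, sig_half]
  -- key set identity
  have hkey : cls L x ∪ (fun y => y + half) '' cls L x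
      = cls L (x + half) ∪ (fun y => y + half) '' cls L (x + half) := by
    rw [← preimage_sigma_image, ← preimage_sigma_image, himg]
  have cancel : ∀ a : Torus, a + half + half = a := fun a => by
    rw [add_assoc, half_add_half, add_zero]
  have main : (fun y => y + half) '' cls L x = cls L (x + half) := by
    apply Set.Subset.antisymm
    · rintro _ ⟨c, hc, rfl⟩
      have : c + half ∈ cls L (x + half) ∪ (fun y => y + half) '' cls L (x + half) := by
        rw [← hkey]; exact Or.inr ⟨c, hc, rfl⟩
      rcases this with h | ⟨d, hd, hde⟩
      · exact h
      · exfalso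
        have : c = d := by
          have := congrArg (fun t => t + half) hde
          simpa [cancel] using this.symm
        exact (Set.disjoint_left.1 hdisj hc (this ▸ hd))
    · intro d hd
      have : d ∈ cls L x ∪ (fun y => y + half) '' cls L x := by
        rw [hkey]; exact Or.inl hd
      rcases this with h | h
      · exact absurd hd (Set.disjoint_left.1 hdisj h)
      · exact h
  refine ⟨main, ?_, ?_⟩
  · rw [main]; exact hdisj
  · exact preimage_sigma_image (cls L x)
end
end

section
/- A 2-invariant lamination on 𝕋 has at most one critical class. -/
noncomputable section
open Set

/-- The 2-torsion of the circle is `{0, 1/2}`. -/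
lemma two_torsion (c : Torus) (h : c + c = 0) : c = 0 ∨ c = half := by
  obtain ⟨r, rfl⟩ := QuotientAddGroup.mk_surjective c
  rw [← AddCircle.coe_add, AddCircle.coe_eq_zero_iff] at h
  obtain ⟨n, hn⟩ := h
  simp only [zsmul_eq_mul, mul_one] at hn
  rcases Int.even_or_odd n with ⟨m, hm⟩ | ⟨m, hm⟩
  · left
    rw [AddCircle.coe_eq_zero_iff]
    refine ⟨m, ?_⟩
    simp only [zsmul_eq_mul, mul_one]
    have : ((n : ℝ)) = (m : ℝ) + m := by exact_mod_cast congrArg Int.cast hm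
    linarith [hn, this]
  · right
    rw [half, ← sub_eq_zero, ← AddCircle.coe_sub, AddCircle.coe_eq_zero_iff]
    refine ⟨m, ?_⟩
    simp only [zsmul_eq_mul, mul_one]
    have : ((n : ℝ)) = 2 * m + 1 := by exact_mod_cast congrArg Int.cast hm
    linarith [hn, this]

/-- Adding a half turn gives the antipodal point on the unit circle. -/
lemma emb_add_half (a : Torus) : emb (a + half) = - emb a := by
  rw [emb, emb, AddCircle.toCircle_add]
  have : (AddCircle.toCircle half : ℂ) = -1 := by
    rw [half, AddCircle.toCircle_apply_mk, Circle.coe_exp]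
    rw [show (2 * Real.pi / 1 * (1/2) : ℝ) = Real.pi by ring]
    exact Complex.exp_pi_mul_I
  push_cast
  rw [this]; ring

/-- The convex hull of a critical class contains the center of the circle. -/
lemma zero_mem_hull (L : Lamination) (x : Torus) (hx : ¬ Set.InjOn sigma (cls L x)) :
    (0 : ℂ) ∈ convexHull ℝ (emb '' {z | L.r x z}) := by
  rw [Set.InjOn] at hx
  push_neg at hx
  obtain ⟨a, ha, b, hb, hab, hne⟩ := hx
  have h2 : (b - a) + (b - a) = 0 := by
    have : a + a = b + b := hab
    abel_nf
    abel_nf at this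
    rw [← this]; abel
  rcases two_torsion _ h2 with h0 | hhalf
  · exact absurd (by rw [← sub_eq_zero]; rw [sub_eq_zero] at h0 ⊢; exact h0.symm) hne
  have hb' : b = a + half := by rw [← hhalf]; abel
  have hea : emb a ∈ emb '' {z | L.r x z} := ⟨a, ha, rfl⟩
  have heb : -emb a ∈ emb '' {z | L.r x z} := ⟨b, hb, by rw [hb', emb_add_half]⟩
  have : (0:ℂ) ∈ segment ℝ (emb a) (-emb a) := by
    have hm := midpoint_mem_segment (𝕜 := ℝ) (emb a) (-emb a)
    rwa [midpoint_self_neg ℝ] at hm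
  exact segment_subset_convexHull hea heb this

/-- A 2-invariant lamination has at most one critical class. -/
theorem critical_class_unique (L : Lamination) (x y : Torus)
    (hx : ¬ Set.InjOn sigma (cls L x)) (hy : ¬ Set.InjOn sigma (cls L y)) :
    L.r x y := by
  by_contra h
  exact Set.disjoint_left.mp (L.unlinked x y h) (zero_mem_hull L x hx) (zero_mem_hull L y hy)
end
end
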